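/- Let U be a stable ordered-union ultrafilter on FIN and let F be a front on some X ∈ FIN^[∞] with [X] ∈ U. Then the collection U↾F of all subsets A ⊆ F such that F|Y ⊆ A for some Y ≤ X with [Y] ∈ U is an ultrafilter on the base set F. -/

import Mathlib

open Classical

attribute [local instance] Classical.propDecidable

set_option maxHeartbeats 1000000

/-! ### FIN and block sequences -/

/-- `FIN`: the finite nonempty subsets of `ℕ`. -/
abbrev FIN : Type := {s : Finset ℕ // s.Nonempty}

instance : Inhabited FIN := ⟨⟨{0}, Finset.singleton_nonempty 0⟩⟩

/-- The least element of a member of `FIN`. -/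
def sMin (s : FIN) : ℕ := s.1.min' s.2

/-- The greatest element of a member of `FIN`. -/
def sMax (s : FIN) : ℕ := s.1.max' s.2

/-- `minmax(s) = (min s, max s)`. -/
def minmaxF (s : FIN) : ℕ × ℕ := (sMin s, sMax s)

/-- `s <_b t`: the block `s` lies entirely below the block `t`. -/
def blt (s t : FIN) : Prop := sMax s < sMin t

/-- Union of two members of `FIN`. -/
def funion (s t : FIN) : FIN :=
  ⟨s.1 ∪ t.1, by rcases s.2 with ⟨x, hx⟩; exact ⟨x, Finset.mem_union_left _ hx⟩⟩

/-- `X : ℕ → FIN` is an infinite block sequence. -/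
def IsBSeq (X : ℕ → FIN) : Prop := ∀ i, blt (X i) (X (i + 1))

/-- A finite block sequence, coded as a list. -/
def IsFBSeq (a : List FIN) : Prop := a.Chain' blt

/-- `[X]`: the set of unions of finitely many (at least one) blocks of `X`. -/
def BU (X : ℕ → FIN) : Set FIN :=
  {s | ∃ I : Finset ℕ, I.Nonempty ∧ s.1 = I.biUnion fun i => (X i).1}

/-- `X ≤ Y` for infinite block sequences. -/
def seqLE (X Y : ℕ → FIN) : Prop := ∀ i, X i ∈ BU Y

/-- `a ≤ Y` for a finite block sequence `a`. -/
def finLE (a : List FIN) (Y : ℕ → FIN) : Prop := ∀ s ∈ a, s ∈ BU Y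

/-- every block of `a` lies below every block of `x`. -/
def listblt (a x : List FIN) : Prop := ∀ s ∈ a, ∀ t ∈ x, blt s t

/-- `X ≤* Y`: some tail `X/n` satisfies `X/n ≤ Y`. -/
def leStar (X Y : ℕ → FIN) : Prop := ∃ n : ℕ, ∀ i, n < sMin (X i) → X i ∈ BU Y

/-- `U` is an ordered-union ultrafilter on `FIN`. -/
def IsOrderedUnion (U : Ultrafilter FIN) : Prop :=
  ∀ A ∈ U, ∃ X : ℕ → FIN, IsBSeq X ∧ BU X ∈ U ∧ BU X ⊆ A

/-- `U` is a stable ordered-union ultrafilter on `FIN`. -/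
def IsStableOrderedUnion (U : Ultrafilter FIN) : Prop :=
  IsOrderedUnion U ∧
    ∀ Xs : ℕ → ℕ → FIN, (∀ i, IsBSeq (Xs i)) → (∀ i, BU (Xs i) ∈ U) →
      (∀ i, leStar (Xs (i + 1)) (Xs i)) →
      ∃ X : ℕ → FIN, IsBSeq X ∧ BU X ∈ U ∧ ∀ i, leStar X (Xs i)

/-! ### Tukey and Rudin–Keisler notions -/

/-- `B` is a filter base (cofinal subset) for the ultrafilter `U`. -/
def IsBaseFor {α : Type} (U : Ultrafilter α) (B : Set (Set α)) : Prop :=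
  (∀ b ∈ B, b ∈ U) ∧ ∀ A ∈ U, ∃ b ∈ B, b ⊆ A

/-- `V ≤_T U`: Tukey reducibility. -/
def TukeyLE {β α : Type} (V : Ultrafilter β) (U : Ultrafilter α) : Prop :=
  ∃ f : Set α → Set β, ∀ B : Set (Set α), IsBaseFor U B → IsBaseFor V (f '' B)

/-- `U ≡_T V`: Tukey equivalence. -/
def TukeyEquiv {α β : Type} (U : Ultrafilter α) (V : Ultrafilter β) : Prop :=
  TukeyLE U V ∧ TukeyLE V U

/-- `V` is nonprincipal. -/
def Nonprincipal {α : Type} (V : Ultrafilter α) : Prop := ∀ a : α, V ≠ pure a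

/-- `U` and `V` are isomorphic (Rudin–Keisler equivalent): some bijection of the base
sets maps one to the other. -/
def RKIso {α β : Type} (U : Ultrafilter α) (V : Ultrafilter β) : Prop :=
  ∃ e : α ≃ β, Ultrafilter.map (fun a => e a) U = V

/-- The Fubini limit `lim_{i → V} W_i`, an ultrafilter on `I × A`. -/
def fubini {I A : Type} (V : Ultrafilter I) (W : I → Ultrafilter A) : Ultrafilter (I × A) :=
  V.bind fun i => (W i).map fun a => (i, a)

/-- The class `C₀ = {U, U_min, U_max, U_minmax}`. -/
inductive InC0 (U : Ultrafilter FIN) : ∀ {α : Type}, Ultrafilter α → Prop where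
  | u : InC0 U U
  | min : InC0 U (U.map sMin)
  | max : InC0 U (U.map sMax)
  | minmax : InC0 U (U.map minmaxF)

/-- The class `C_{ω₁}` of countable Fubini iterates of `U, U_min, U_max, U_minmax`. -/
inductive InC (U : Ultrafilter FIN) : ∀ {α : Type}, Ultrafilter α → Prop where
  | base {α : Type} (V : Ultrafilter α) : InC0 U V → InC U V
  | fub {I A : Type} (V : Ultrafilter I) (W : I → Ultrafilter A) :
      InC0 U V → (∀ i, InC U (W i)) → InC U (fubini V W)

/-- The class `D_{ω₁}(W)` of countable Fubini iterates of a single ultrafilter `W`. -/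
inductive IterC {β : Type} (W : Ultrafilter β) : ∀ {α : Type}, Ultrafilter α → Prop where
  | base : IterC W W
  | fub {A : Type} (Ws : β → Ultrafilter A) : (∀ i, IterC W (Ws i)) → IterC W (fubini W Ws)

/-! ### Fronts -/

/-- `a` is an initial segment of the infinite block sequence `Y`. -/
def IsInit (a : List FIN) (Y : ℕ → FIN) : Prop := ∀ i : Fin a.length, a.get i = Y i

/-- Nash-Williams family: no member is a proper initial segment of another. -/
def IsNashWilliams (B : Set (List FIN)) : Prop :=
  ∀ a ∈ B, ∀ b ∈ B, a <+: b → a = b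

/-- `F` is a front on `X`. -/
def IsFront (F : Set (List FIN)) (X : ℕ → FIN) : Prop :=
  IsNashWilliams F ∧ (∀ a ∈ F, IsFBSeq a ∧ finLE a X) ∧
    ∀ Y : ℕ → FIN, IsBSeq Y → seqLE Y X → ∃ a ∈ F, IsInit a Y

/-- `F̂`: all initial segments of members of `F` (including the empty sequence). -/
def hatF (F : Set (List FIN)) : Set (List FIN) := {a | ∃ b ∈ F, a <+: b}

/-- `F|Y`. -/
def frontRestrict (F : Set (List FIN)) (Y : ℕ → FIN) : Set (List FIN) :=
  {a | a ∈ F ∧ finLE a Y}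

/-- `F̂|Y`. -/
def hatRestrict (F : Set (List FIN)) (Y : ℕ → FIN) : Set (List FIN) :=
  {a | a ∈ hatF F ∧ finLE a Y}

/-! ### Uniform fronts -/

/-- `X/n`, the tail of `X` made of blocks with minimum `> n`. -/
noncomputable def tailSeq (X : ℕ → FIN) (n : ℕ) : ℕ → FIN := fun j =>
  if h : ∃ i, n < sMin (X i) then X (Nat.find h + j) else X j

/-- `B_(s) = {a : s <_b a, s⌢a ∈ B}`. -/
def Bsub (B : Set (List FIN)) (s : FIN) : Set (List FIN) :=
  {a | (∀ t ∈ a, blt s t) ∧ (s :: a) ∈ B}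

/-- A set `A ⊆ FIN` is small if it contains no `[Z]`. -/
def IsSmallSet (A : Set FIN) : Prop := ∀ Z : ℕ → FIN, IsBSeq Z → ¬ BU Z ⊆ A

/-- `B` is `α`-uniform on `X`. -/
inductive AlphaUniform : Ordinal.{0} → Set (List FIN) → (ℕ → FIN) → Prop where
  | zero (X : ℕ → FIN) : AlphaUniform 0 ({([] : List FIN)} : Set (List FIN)) X
  | succ (β : Ordinal.{0}) (B : Set (List FIN)) (X : ℕ → FIN)
      (h : ∀ s ∈ BU X, AlphaUniform β (Bsub B s) (tailSeq X (sMax s))) :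
      AlphaUniform (β + 1) B X
  | limit (α : Ordinal.{0}) (B : Set (List FIN)) (X : ℕ → FIN) (f : FIN → Ordinal.{0})
      (hl : α ≠ 0 ∧ ∀ a < α, Order.succ a < α)
      (h1 : ∀ s ∈ BU X, f s < α)
      (h2 : ∀ s ∈ BU X, AlphaUniform (f s) (Bsub B s) (tailSeq X (sMax s)))
      (h3 : ∀ γ < α, IsSmallSet {s | s ∈ BU X ∧ f s ≤ γ}) :
      AlphaUniform α B X

/-- `B` is a uniform family on `X` (i.e. `α`-uniform for some `α < ω₁`). -/
def IsUniformFam (B : Set (List FIN)) (X : ℕ → FIN) : Prop :=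
  ∃ α : Ordinal.{0}, α < (Cardinal.aleph 1).ord ∧ AlphaUniform α B X

/-! ### Separation types and the canonical map `Γ_γ` -/

/-- The six labels `sm, min-sep, max-sep, minmax-sep, sss, vss`. -/
inductive SepType : Type where
  | sm | minsep | maxsep | minmaxsep | sss | vss
  deriving DecidableEq

/-- The maps on `FIN` associated to the labels. -/
def SepType.eval : SepType → FIN → Finset ℕ
  | .sm, _ => ∅
  | .minsep, s => {sMin s}
  | .maxsep, s => {sMax s}
  | .minmaxsep, s => {sMin s, sMax s}
  | .sss, s => s.1
  | .vss, s => s.1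

/-- One step `k_i ↦ k_{i+1}` in the construction of `Γ_γ(a)`. -/
noncomputable def nextIdx (γ : List FIN → SepType) (a : List FIN) (k : ℕ) : ℕ :=
  if a.length ≤ k then a.length
  else if γ (a.take k) = SepType.sss then
    (if h : ∃ m, k < m ∧ m ≤ a.length ∧ γ (a.take (m - 1)) = SepType.vss then Nat.find h
     else a.length)
  else if h2 : γ (a.take k) = SepType.minsep ∧
      ∃ l, k < l ∧ l < a.length ∧ γ (a.take l) ≠ SepType.sm then
    (if γ (a.take (Nat.find h2.2)) = SepType.maxsep then Nat.find h2.2 + 1 else k + 1)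
  else k + 1

/-- The sequence of cut points `k_0 = 0 < k_1 < ...` for `Γ_γ(a)`. -/
noncomputable def cuts (γ : List FIN → SepType) (a : List FIN) : ℕ → ℕ
  | 0 => 0
  | i + 1 => nextIdx γ a (cuts γ a i)

/-- The `i`-th entry `⋃_{k_i ≤ j < k_{i+1}} γ(a↾j)(a(j))` of `Γ_γ(a)`. -/
noncomputable def gammaSeg (γ : List FIN → SepType) (a : List FIN) (i : ℕ) : Finset ℕ :=
  (Finset.Ico (cuts γ a i) (cuts γ a (i + 1))).biUnion
    fun j => (γ (a.take j)).eval (a.getD j default)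

/-- `Γ_γ(a)`, with all terms equal to `∅` omitted. -/
noncomputable def GammaList (γ : List FIN → SepType) (a : List FIN) : List (Finset ℕ) :=
  ((List.range a.length).map (gammaSeg γ a)).filter fun s => decide (s ≠ (∅ : Finset ℕ))

/-- `x` is a finite block sequence with `a <_b x`, `x ≤ Y` and `a⌢x ∈ F`. -/
def ExtendsToFront (F : Set (List FIN)) (Y : ℕ → FIN) (a x : List FIN) : Prop :=
  IsFBSeq x ∧ listblt a x ∧ finLE x Y ∧ (a ++ x) ∈ F

/-- `l` is the least index `≥ 1` with `γ(a⌢(x↾l)) ≠ sm`. -/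
def FirstNonSm (γ : List FIN → SepType) (a x : List FIN) (l : ℕ) : Prop :=
  1 ≤ l ∧ l ≤ x.length ∧ γ (a ++ x.take l) ≠ SepType.sm ∧
    ∀ l', 1 ≤ l' → l' < l → γ (a ++ x.take l') = SepType.sm

/-- `γ` is admissible with respect to the front `F` on `X`. -/
structure Admissible (F : Set (List FIN)) (X : ℕ → FIN) (γ : List FIN → SepType) : Prop where
  cond1 : ∀ a ∈ hatF F, γ a = SepType.sss →
    ∀ x : List FIN, IsFBSeq x → listblt a x → (a ++ x) ∈ hatF F →
      ∀ k, γ (a ++ x.take k) = SepType.vss →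
        (∀ k' < k, γ (a ++ x.take k') ≠ SepType.vss) →
        ∀ l < k, γ (a ++ x.take l) = SepType.sm ∨ γ (a ++ x.take l) = SepType.sss
  cond2 : ∀ a ∈ hatF F \ F,
    (∀ x, ExtendsToFront F X a x → ∀ k ≤ x.length, γ (a ++ x.take k) = SepType.sm) ∨
    (∀ x, ExtendsToFront F X a x → ∃ k ≤ x.length, γ (a ++ x.take k) ≠ SepType.sm)
  cond3 : ∀ a ∈ hatF F \ F, γ a = SepType.minsep →
    (∀ x, ExtendsToFront F X a x → ∃ l, FirstNonSm γ a x l) →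
    ((∀ x, ExtendsToFront F X a x → ∀ l, FirstNonSm γ a x l →
        γ (a ++ x.take l) = SepType.maxsep) ∨
     (∀ x, ExtendsToFront F X a x → ∀ l, FirstNonSm γ a x l →
        γ (a ++ x.take l) ≠ SepType.maxsep))

/-! ### Marked concatenation, separating and mixing -/

/-- `a□⌢x`: concatenation, where the mark `m = true` (that is, `a↑`) means that the last
block of `a` is unioned with the first block of `x`. -/
def mcat (a : List FIN) (m : Bool) (x : List FIN) : List FIN :=
  match m, a.getLast?, x with
  | true, some s, t :: ts => a.dropLast ++ (funion s t :: ts)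
  | _, _, _ => a ++ x

/-- `[Y/a]`: the members of `[Y]` lying beyond all blocks of `a`. -/
def BUafter (Y : ℕ → FIN) (a : List FIN) : Set FIN :=
  {s | s ∈ BU Y ∧ ∀ t ∈ a, blt t s}

/-- `x` is a (possibly empty) finite block sequence `≤ Y/(a,b)`. -/
def leqAfter (x : List FIN) (Y : ℕ → FIN) (a b : List FIN) : Prop :=
  IsFBSeq x ∧ finLE x Y ∧ listblt a x ∧ listblt b x

/-- `Y` separates `a□` and `b□`. -/
def Separates (F : Set (List FIN)) (g : List FIN → ℕ) (Y : ℕ → FIN)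
    (a : List FIN) (m : Bool) (b : List FIN) (m' : Bool) : Prop :=
  ∀ x y : List FIN, leqAfter x Y a b → leqAfter y Y a b →
    mcat a m x ∈ F → mcat b m' y ∈ F → g (mcat a m x) ≠ g (mcat b m' y)

/-- `Y` mixes `a□` and `b□`. -/
def Mixes (F : Set (List FIN)) (g : List FIN → ℕ) (Y : ℕ → FIN)
    (a : List FIN) (m : Bool) (b : List FIN) (m' : Bool) : Prop :=
  ∀ Z : ℕ → FIN, IsBSeq Z → seqLE Z Y → ¬ Separates F g Z a m b m'

/-- `Y` decides `a□` and `b□`. -/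
def Decides (F : Set (List FIN)) (g : List FIN → ℕ) (Y : ℕ → FIN)
    (a : List FIN) (m : Bool) (b : List FIN) (m' : Bool) : Prop :=
  Separates F g Y a m b m' ∨ Mixes F g Y a m b m'

/-- `a□` is strongly mixed by `Y`. -/
def StronglyMixed (F : Set (List FIN)) (g : List FIN → ℕ) (Y : ℕ → FIN)
    (a : List FIN) (m : Bool) : Prop :=
  ∀ s ∈ BUafter Y a, ∀ t ∈ BUafter Y a,
    Mixes F g Y (mcat a m [s]) false (mcat a m [t]) false

/-- `a□` is min-separated by `Y`. -/
def MinSeparated (F : Set (List FIN)) (g : List FIN → ℕ) (Y : ℕ → FIN)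
    (a : List FIN) (m : Bool) : Prop :=
  ∀ s ∈ BUafter Y a, ∀ t ∈ BUafter Y a,
    (Mixes F g Y (mcat a m [s]) false (mcat a m [t]) false ↔ sMin s = sMin t)

/-- `a□` is max-separated by `Y`. -/
def MaxSeparated (F : Set (List FIN)) (g : List FIN → ℕ) (Y : ℕ → FIN)
    (a : List FIN) (m : Bool) : Prop :=
  ∀ s ∈ BUafter Y a, ∀ t ∈ BUafter Y a,
    (Mixes F g Y (mcat a m [s]) false (mcat a m [t]) false ↔ sMax s = sMax t)

/-- `a□` is minmax-separated by `Y`. -/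
def MinMaxSeparated (F : Set (List FIN)) (g : List FIN → ℕ) (Y : ℕ → FIN)
    (a : List FIN) (m : Bool) : Prop :=
  ∀ s ∈ BUafter Y a, ∀ t ∈ BUafter Y a,
    (Mixes F g Y (mcat a m [s]) false (mcat a m [t]) false ↔ (sMin s = sMin t ∧ sMax s = sMax t))

/-- `a□` is strongly separated by `Y`. -/
def StronglySeparated (F : Set (List FIN)) (g : List FIN → ℕ) (Y : ℕ → FIN)
    (a : List FIN) (m : Bool) : Prop :=
  ∀ s ∈ BUafter Y a, ∀ t ∈ BUafter Y a,
    (Mixes F g Y (mcat a m [s]) false (mcat a m [t]) false ↔ s = t)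

/-- `a□` is separated in some sense by `Y`. -/
def SepSomeSense (F : Set (List FIN)) (g : List FIN → ℕ) (Y : ℕ → FIN)
    (a : List FIN) (m : Bool) : Prop :=
  MinSeparated F g Y a m ∨ MaxSeparated F g Y a m ∨ MinMaxSeparated F g Y a m ∨
    StronglySeparated F g Y a m

/-- `a□` is completely decided by `Y`. -/
def CompletelyDecided (F : Set (List FIN)) (g : List FIN → ℕ) (Y : ℕ → FIN)
    (a : List FIN) (m : Bool) : Prop :=
  StronglyMixed F g Y a m ∨ SepSomeSense F g Y a m

/-- `a□` is still strongly separated by `Y`. -/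
def StillStronglySep (F : Set (List FIN)) (g : List FIN → ℕ) (Y : ℕ → FIN)
    (a : List FIN) (m : Bool) : Prop :=
  StronglySeparated F g Y a m ∧
    ∀ s ∈ BUafter Y a, Mixes F g Y (mcat a m [s]) false (a ++ [s]) true

/-- `a□` is very strongly separated by `Y`. -/
def VeryStronglySep (F : Set (List FIN)) (g : List FIN → ℕ) (Y : ℕ → FIN)
    (a : List FIN) (m : Bool) : Prop :=
  StronglySeparated F g Y a m ∧
    ∀ s ∈ BUafter Y a, Separates F g Y (mcat a m [s]) false (a ++ [s]) true

/-- A zero-one law: the relation `P s t` holds for all admissible `s <_b t ∈ [Y/(a,b)]`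
or for none of them. -/
def ZOL (Y : ℕ → FIN) (a b : List FIN) (D P : FIN → FIN → Prop) : Prop :=
  (∀ s t : FIN, s ∈ BUafter Y (a ++ b) → t ∈ BUafter Y (a ++ b) → blt s t → D s t → P s t) ∨
  (∀ s t : FIN, s ∈ BUafter Y (a ++ b) → t ∈ BUafter Y (a ++ b) → blt s t → D s t → ¬ P s t)

/-- `x` is a finite block sequence with `a <_b x`, `x ≤ Y` and `a□⌢x ∈ F`. -/
def ExtendsToFrontM (F : Set (List FIN)) (Y : ℕ → FIN) (a : List FIN) (m : Bool)
    (x : List FIN) : Prop :=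
  IsFBSeq x ∧ listblt a x ∧ finLE x Y ∧ mcat a m x ∈ F

/-- `k` is the least stage `≥ 1` such that `a⌢(x↾k)` is separated in some sense by `Y`. -/
def LeastSepStage (F : Set (List FIN)) (g : List FIN → ℕ) (Y : ℕ → FIN)
    (a x : List FIN) (k : ℕ) : Prop :=
  1 ≤ k ∧ k ≤ x.length ∧ SepSomeSense F g Y (a ++ x.take k) false ∧
    ∀ k', 1 ≤ k' → k' < k → ¬ SepSomeSense F g Y (a ++ x.take k') false

/-- `Y` is canonical for `g`. -/
def CanonicalFor (F : Set (List FIN)) (g : List FIN → ℕ) (Y : ℕ → FIN) : Prop :=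
  (∀ a ∈ hatRestrict F Y, ∀ b ∈ hatRestrict F Y, ∀ m m' : Bool, Decides F g Y a m b m') ∧
  (∀ a ∈ hatRestrict F Y, ∀ m : Bool, CompletelyDecided F g Y a m) ∧
  (∀ a ∈ hatRestrict F Y, ∀ ma ms : Bool,
    ZOL Y a a (fun s _ => mcat a ma [s] ∈ hatRestrict F Y)
      (fun s _ => Mixes F g Y a ma (mcat a ma [s]) ms)) ∧
  (∀ a ∈ hatRestrict F Y, ∀ b ∈ hatRestrict F Y, ∀ ma mb ms ms' : Bool,
    ZOL Y a b
      (fun s _ => mcat a ma [s] ∈ hatRestrict F Y ∧ mcat b mb [s] ∈ hatRestrict F Y)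
      (fun s _ => Mixes F g Y (mcat a ma [s]) ms (mcat b mb [s]) ms')) ∧
  (∀ a ∈ hatRestrict F Y, ∀ ma ms mt : Bool,
    ZOL Y a a
      (fun s t => mcat a ma [s] ∈ hatRestrict F Y ∧
        mcat (mcat a ma [s]) ms [t] ∈ hatRestrict F Y)
      (fun s t => Mixes F g Y (mcat a ma [s]) ms (mcat (mcat a ma [s]) ms [t]) mt)) ∧
  (∀ a ∈ hatRestrict F Y, ∀ b ∈ hatRestrict F Y, ∀ ma mb ms ms' mt : Bool,
    ZOL Y a b
      (fun s t => mcat a ma [s] ∈ hatRestrict F Y ∧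
        mcat (mcat b mb [s]) ms' [t] ∈ hatRestrict F Y)
      (fun s t => Mixes F g Y (mcat a ma [s]) ms (mcat (mcat b mb [s]) ms' [t]) mt)) ∧
  (∀ a : List FIN, ∀ m : Bool,
    ((a ∈ hatRestrict F Y ∧ a ∉ F) ∨ (a ∈ F ∧ finLE a Y ∧ m = true)) →
    ((∀ x, ExtendsToFrontM F Y a m x →
        ∀ k, 1 ≤ k → k ≤ x.length → StronglyMixed F g Y (mcat a m (x.take k)) false) ∨
     (∀ x, ExtendsToFrontM F Y a m x →
        ∃ k, 1 ≤ k ∧ k ≤ x.length ∧ SepSomeSense F g Y (mcat a m (x.take k)) false))) ∧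
  (∀ a ∈ hatRestrict F Y, MinSeparated F g Y a false →
    (∀ x, ExtendsToFrontM F Y a false x →
      ∃ k, 1 ≤ k ∧ k ≤ x.length ∧ SepSomeSense F g Y (a ++ x.take k) false) →
    ((∀ x, ExtendsToFrontM F Y a false x → ∀ k, LeastSepStage F g Y a x k →
        MaxSeparated F g Y (a ++ x.take k) false) ∨
     (∀ x, ExtendsToFrontM F Y a false x → ∀ k, LeastSepStage F g Y a x k →
        ¬ MaxSeparated F g Y (a ++ x.take k) false)))

/-- The tripling operation `Y ↦ (Y(3i) ∪ Y(3i+1) ∪ Y(3i+2))_{i}`. -/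
def tripleUp (Y : ℕ → FIN) : ℕ → FIN := fun i =>
  funion (Y (3 * i)) (funion (Y (3 * i + 1)) (Y (3 * i + 2)))

/-- `Z/a`. -/
noncomputable def seqAfter (Z : ℕ → FIN) (a : List FIN) : ℕ → FIN :=
  match a.getLast? with
  | none => Z
  | some s => tailSeq Z (sMax s)

/-- `Z/(a,b)`. -/
noncomputable def seqAfter2 (Z : ℕ → FIN) (a b : List FIN) : ℕ → FIN :=
  seqAfter (seqAfter Z a) b

/-- `γ` is the parameter function of the canonical `Y`: it records, for each
`a ∈ (F̂∖F)|Y`, the way in which `a` is completely decided by `Y`. -/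
def IsParameterOf (F : Set (List FIN)) (g : List FIN → ℕ) (Y : ℕ → FIN)
    (γ : List FIN → SepType) : Prop :=
  ∀ a : List FIN, a ∈ hatF F → a ∉ F → finLE a Y →
    ((γ a = SepType.sm ↔ StronglyMixed F g Y a false) ∧
     (γ a = SepType.minsep ↔ MinSeparated F g Y a false) ∧
     (γ a = SepType.maxsep ↔ MaxSeparated F g Y a false) ∧
     (γ a = SepType.minmaxsep ↔ MinMaxSeparated F g Y a false) ∧
     (γ a = SepType.sss ↔ StillStronglySep F g Y a false) ∧
     (γ a = SepType.vss ↔ VeryStronglySep F g Y a false))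

/-- The family `U↾F` generated by the sets `F|Y` with `[Y] ∈ U`, `Y ≤ X`. -/
def UFront (U : Ultrafilter FIN) (F : Set (List FIN)) (X : ℕ → FIN) : Set (Set (List FIN)) :=
  {A | A ⊆ F ∧ ∃ Y : ℕ → FIN, IsBSeq Y ∧ seqLE Y X ∧ BU Y ∈ U ∧ frontRestrict F Y ⊆ A}

/-!
Call `S ∈ U` accepting for a finite block sequence `a` if every extension of `a` by blocks of `S`
that lies in `F` lies in `A`. If `[]` has an accepting set we are done. Otherwise the front is
explored by combinatorial forcing: if `a ∉ F` has no accepting set, then `U`-almost no one-block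
extension `a⌢s` has one, since otherwise the accepting sets could be diagonalized into one for `a`.
Diagonalizing once more, over the finitely many `a` below each block, yields `S ∈ U` such that no
member of `F` built from blocks of `S` has an accepting set, so none lies in `A`.

The diagonalization is where stability enters: it gives `Y` with `[Y] ∈ U` whose tails lie in
each of countably many given sets. Colouring a block by the parity of the number of index
intervals it meets, a homogeneous `[Z] ⊆ [Y]` must be even, and then the union of two blocks of
`Z` stays even only if they lie in non-adjacent intervals; with intervals chosen from the tail
thresholds, every block of `[Z]` lies beyond the threshold of every earlier one.
-/

open Filter Finset

theorem sMin_le_sMax (s : FIN) : sMin s ≤ sMax s :=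
  Finset.min'_le_max' _ s.2

theorem sMin_le {s : FIN} {x : ℕ} (hx : x ∈ s.1) : sMin s ≤ x :=
  Finset.min'_le _ _ hx

theorem le_sMax {s : FIN} {x : ℕ} (hx : x ∈ s.1) : x ≤ sMax s :=
  Finset.le_max' _ _ hx

theorem blt_trans {s t u : FIN} (hst : blt s t) (htu : blt t u) : blt s u :=
  hst.trans_le ((sMin_le_sMax t).trans htu.le)

instance : IsTrans FIN blt := ⟨fun _ _ _ => blt_trans⟩

theorem IsBSeq.le_sMin {X : ℕ → FIN} (hX : IsBSeq X) (i : ℕ) : i ≤ sMin (X i) := by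
  induction i with
  | zero => exact Nat.zero_le _
  | succ i ih => exact (ih.trans (sMin_le_sMax _)).trans_lt (hX i)

theorem IsFBSeq.pairwise {a : List FIN} (ha : IsFBSeq a) : a.Pairwise blt :=
  List.IsChain.pairwise (R := blt) ha

theorem self_mem_BU (X : ℕ → FIN) (i : ℕ) : X i ∈ BU X :=
  ⟨{i}, Finset.singleton_nonempty i, by simp⟩

theorem biUnion_mem_BU {s : FIN} {Y : ℕ → FIN} {X : ℕ → FIN} {I : Finset ℕ} (hI : I.Nonempty)
    (hs : s.1 = I.biUnion fun i => (Y i).1) (hY : ∀ i ∈ I, Y i ∈ BU X) : s ∈ BU X := by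
  choose! J hJ hYJ using hY
  obtain ⟨i, hi⟩ := hI
  refine ⟨I.biUnion J, ⟨_, Finset.mem_biUnion.2 ⟨i, hi, (hJ i hi).choose_spec⟩⟩, ?_⟩
  rw [hs, Finset.biUnion_biUnion]
  exact Finset.biUnion_congr rfl hYJ

theorem funion_mem_BU {s t : FIN} {X : ℕ → FIN} (hs : s ∈ BU X) (ht : t ∈ BU X) :
    funion s t ∈ BU X := by
  obtain ⟨I, hI, hs⟩ := hs
  obtain ⟨J, -, ht⟩ := ht
  exact ⟨I ∪ J, hI.mono Finset.subset_union_left, by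
    rw [Finset.union_biUnion, ← hs, ← ht]; rfl⟩

theorem seqLE_iff_BU_subset {X Y : ℕ → FIN} : seqLE X Y ↔ BU X ⊆ BU Y :=
  ⟨fun h _ ⟨_, hI, hs⟩ => biUnion_mem_BU hI hs fun i _ => h i, fun h i => h (self_mem_BU X i)⟩

theorem leStar.exists_mem_BU {X Y : ℕ → FIN} (h : leStar X Y) :
    ∃ n, ∀ t ∈ BU X, n < sMin t → t ∈ BU Y := by
  obtain ⟨n, hn⟩ := h
  refine ⟨n, fun t ⟨I, hI, ht⟩ hnt => biUnion_mem_BU hI ht fun i hi => hn i ?_⟩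
  exact hnt.trans_le (sMin_le (ht ▸ Finset.mem_biUnion.2 ⟨i, hi, Finset.min'_mem _ _⟩))

theorem IsOrderedUnion.setOf_lt_sMin_mem {U : Ultrafilter FIN} (hU : IsOrderedUnion U) (n : ℕ) :
    {s : FIN | n < sMin s} ∈ U := by
  refine (U.mem_or_compl_mem _).resolve_right fun h => ?_
  obtain ⟨Z, hZ, -, hZn⟩ := hU _ h
  exact hZn (self_mem_BU Z (n + 1)) ((Nat.lt_succ_self n).trans_le (hZ.le_sMin _))

theorem image_funion (f : ℕ → ℕ) (s t : FIN) :
    (funion s t).1.image f = s.1.image f ∪ t.1.image f :=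
  Finset.image_union _ _

theorem lt_of_even_card_image {f : ℕ → ℕ} (hf : Monotone f) {s t : FIN} (hst : blt s t)
    (hs : Even #(s.1.image f)) (ht : Even #(t.1.image f))
    (hst' : Even #((funion s t).1.image f)) : f (sMax s) < f (sMin t) := by
  by_contra hle
  have hc : f (sMax s) = f (sMin t) := le_antisymm (hf hst.le) (not_lt.1 hle)
  have hinter : s.1.image f ∩ t.1.image f = {f (sMax s)} := by
    ext y
    simp only [mem_inter, mem_image, mem_singleton]
    constructor
    · rintro ⟨⟨x, hx, rfl⟩, x', hx', hy⟩
      exact le_antisymm (hf (le_sMax hx)) (hc ▸ hy ▸ hf (sMin_le hx'))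
    · rintro rfl
      exact ⟨⟨_, Finset.max'_mem _ _, rfl⟩, _, Finset.min'_mem _ _, hc.symm⟩
  have hcard := card_union_add_card_inter (s.1.image f) (t.1.image f)
  rw [hinter, card_singleton, ← image_funion] at hcard
  rw [Nat.even_iff] at hs ht hst'
  omega

theorem IsOrderedUnion.even_card_image_mem {U : Ultrafilter FIN} (hU : IsOrderedUnion U)
    {f : ℕ → ℕ} (hf : Monotone f) (hf' : Tendsto f atTop atTop) :
    {u : FIN | Even #(u.1.image f)} ∈ U := by
  refine (U.mem_or_compl_mem _).resolve_right fun h => ?_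
  obtain ⟨Z, hZ, -, hZodd⟩ := hU _ h
  obtain ⟨j, hj⟩ := (hf'.eventually_gt_atTop (f (sMax (Z 0)))).exists_forall_of_atTop
  have hlt : f (sMax (Z 0)) < f (sMin (Z (j + 1))) := hj _ ((Nat.le_succ j).trans (hZ.le_sMin _))
  -- far apart blocks have disjoint images, so the union of two odd-sized images is even
  have hdisj : Disjoint ((Z 0).1.image f) ((Z (j + 1)).1.image f) := by
    refine disjoint_left.2 fun y hy hy' => ?_
    obtain ⟨x, hx, rfl⟩ := mem_image.1 hy
    obtain ⟨x', hx', hxx'⟩ := mem_image.1 hy'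
    exact (hf (le_sMax hx)).not_gt (hlt.trans_le (hxx' ▸ hf (sMin_le hx')))
  have h0 := hZodd (self_mem_BU Z 0)
  have h1 := hZodd (self_mem_BU Z (j + 1))
  have h01 := hZodd (funion_mem_BU (self_mem_BU Z 0) (self_mem_BU Z (j + 1)))
  simp only [Set.mem_compl_iff, Set.mem_ofPred_eq, Nat.not_even_iff_odd] at h0 h1 h01
  rw [image_funion, card_union_of_disjoint hdisj] at h01
  exact Nat.not_even_iff_odd.2 h01 (h0.add_odd h1)

theorem exists_separating_index (m : ℕ → ℕ) :
    ∃ idx : ℕ → ℕ, Monotone idx ∧ Tendsto idx atTop atTop ∧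
      ∀ x y, idx x + 2 ≤ idx y → m x < y := by
  set M : ℕ → ℕ := fun x => (range (x + 1)).sup m
  have hM : Monotone M := fun x y hxy => sup_mono (range_subset_range.2 (by omega))
  have hmM : ∀ x, m x ≤ M x := fun x => le_sup (self_mem_range_succ x)
  -- `idx x = k` iff `x ∈ [b k, b (k + 1))`, and `M` on one interval is below the end of the next
  let b : ℕ → ℕ := fun k => Nat.rec 0 (fun _ c => c + M c + 1) k
  have hb_succ : ∀ k, b (k + 1) = b k + M (b k) + 1 := fun _ => rfl
  have hb_mono : Monotone b := monotone_nat_of_le_succ fun k => by rw [hb_succ]; omega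
  have hb_ge : ∀ k, k ≤ b k := fun k => by
    induction k with
    | zero => exact Nat.zero_le _
    | succ k ih => rw [hb_succ]; omega
  have hex : ∀ x, ∃ k, x < b (k + 1) := fun x => ⟨x, hb_ge (x + 1)⟩
  refine ⟨fun x => Nat.find (hex x), fun x y hxy => Nat.find_mono fun k hk => hxy.trans_lt hk,
    tendsto_atTop_atTop.2 fun K => ⟨b K, fun x hx => (Nat.le_find_iff _ _).2 fun k hk =>
      not_lt.2 ((hb_mono (by omega : k + 1 ≤ K)).trans hx)⟩, fun x y hxy => ?_⟩
  simp only at hxy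
  have hx : x < b (Nat.find (hex x) + 1) := Nat.find_spec (hex x)
  have hy : ¬ y < b (Nat.find (hex x) + 1 + 1) :=
    Nat.find_min (hex y) (m := Nat.find (hex x) + 1) (by omega)
  have := hb_succ (Nat.find (hex x) + 1)
  have := hM hx.le
  have := hmM x
  omega

theorem IsStableOrderedUnion.exists_forall_tail_mem {U : Ultrafilter FIN}
    (hU : IsStableOrderedUnion U) {D : ℕ → Set FIN} (hD : ∀ k, D k ∈ U) :
    ∃ Y, BU Y ∈ U ∧ ∃ n : ℕ → ℕ, ∀ k, ∀ t ∈ BU Y, n k < sMin t → t ∈ D k := by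
  have : ∀ A : Set FIN, ∃ Z : ℕ → FIN, A ∈ U → IsBSeq Z ∧ BU Z ∈ U ∧ BU Z ⊆ A := by
    intro A
    by_cases hA : A ∈ U
    · exact (hU.1 A hA).imp fun _ h _ => h
    · exact ⟨default, fun h => absurd h hA⟩
  choose pick hpick using this
  let Xs : ℕ → ℕ → FIN := fun k => Nat.rec (pick (D 0)) (fun k Z => pick (D (k + 1) ∩ BU Z)) k
  have hgood : ∀ k, IsBSeq (Xs k) ∧ BU (Xs k) ∈ U ∧ BU (Xs k) ⊆ D k := fun k => by
    induction k with
    | zero => exact hpick _ (hD 0)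
    | succ k ih =>
      obtain ⟨h1, h2, h3⟩ := hpick _ (inter_mem (hD (k + 1)) ih.2.1)
      exact ⟨h1, h2, h3.trans Set.inter_subset_left⟩
  have hstep : ∀ k, BU (Xs (k + 1)) ⊆ BU (Xs k) := fun k =>
    (hpick _ (inter_mem (hD (k + 1)) (hgood k).2.1)).2.2.trans Set.inter_subset_right
  obtain ⟨Y, -, hYU, hY⟩ := hU.2 Xs (fun k => (hgood k).1) (fun k => (hgood k).2.1)
    fun k => ⟨0, fun i _ => hstep k (self_mem_BU _ i)⟩
  choose n hn using fun k => (hY k).exists_mem_BU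
  exact ⟨Y, hYU, n, fun k t ht hnt => (hgood k).2.2 (hn k t ht hnt)⟩

theorem IsStableOrderedUnion.exists_diagonal {U : Ultrafilter FIN} (hU : IsStableOrderedUnion U)
    {D : ℕ → Set FIN} (hD : ∀ k, D k ∈ U) :
    ∃ S ∈ U, S ⊆ D 0 ∧ ∀ s ∈ S, ∀ t ∈ S, blt s t → t ∈ D (sMax s) := by
  obtain ⟨Y, hYU, n, hn⟩ := hU.exists_forall_tail_mem hD
  obtain ⟨idx, hmono, htend, hsep⟩ := exists_separating_index n
  -- two interleaved coarsenings of `idx`: blocks separated in both are two steps apart in `idx`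
  have hf₁ : Monotone fun x => idx x / 2 := fun x y hxy => Nat.div_le_div_right (hmono hxy)
  have hf₂ : Monotone fun x => (idx x + 1) / 2 := fun x y hxy =>
    Nat.div_le_div_right (Nat.add_le_add_right (hmono hxy) 1)
  have ht₁ : Tendsto (fun x => idx x / 2) atTop atTop :=
    (Nat.tendsto_div_const_atTop two_ne_zero).comp htend
  have ht₂ : Tendsto (fun x => (idx x + 1) / 2) atTop atTop :=
    tendsto_atTop_mono (fun x => Nat.div_le_div_right (Nat.le_succ _)) ht₁
  obtain ⟨Z, -, hZU, hZ⟩ := hU.1 _ (inter_mem (inter_mem (inter_mem hYU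
    (hU.1.even_card_image_mem hf₁ ht₁)) (hU.1.even_card_image_mem hf₂ ht₂))
    (hU.1.setOf_lt_sMin_mem (n 0)))
  refine ⟨BU Z, hZU, fun t ht => hn 0 t (hZ ht).1.1.1 (hZ ht).2, fun s hs t ht hst => ?_⟩
  have h₁ := lt_of_even_card_image hf₁ hst (hZ hs).1.1.2 (hZ ht).1.1.2
    (hZ (funion_mem_BU hs ht)).1.1.2
  have h₂ := lt_of_even_card_image hf₂ hst (hZ hs).1.2 (hZ ht).1.2 (hZ (funion_mem_BU hs ht)).1.2
  exact hn _ t (hZ ht).1.1.1 (hsep _ _ (by omega))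

theorem finite_setOf_sMax_le (k : ℕ) : {s : FIN | sMax s ≤ k}.Finite :=
  ((range (k + 1)).powerset.finite_toSet.preimage Subtype.val_injective.injOn).subset
    fun _ hs => mem_powerset.2 fun _ hx => mem_range.2 (Nat.lt_succ_of_le ((le_sMax hx).trans hs))

theorem List.finite_setOf_length_le_of_forall_mem {α : Type*} {T : Set α} (hT : T.Finite)
    (n : ℕ) : {a : List α | a.length ≤ n ∧ ∀ u ∈ a, u ∈ T}.Finite := by
  have := hT.to_subtype
  refine ((List.finite_length_le T n).image (List.map Subtype.val)).subset fun a ⟨ha, haT⟩ => ?_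
  lift a to List T using haT
  exact ⟨a, by simpa using ha, rfl⟩

theorem IsFBSeq.length_le {a : List FIN} (ha : IsFBSeq a) {k : ℕ} (hk : ∀ u ∈ a, sMax u ≤ k) :
    a.length ≤ k + 1 := by
  have hnd : (a.map sMin).Nodup :=
    List.pairwise_map.2 (ha.pairwise.imp fun hst => ((sMin_le_sMax _).trans_lt hst).ne)
  rw [← List.length_map sMin, ← List.toFinset_card_of_nodup hnd, ← card_range (k + 1)]
  refine card_le_card fun x hx => ?_
  obtain ⟨u, hu, rfl⟩ := List.mem_map.1 (List.mem_toFinset.1 hx)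
  exact mem_range.2 (Nat.lt_succ_of_le ((sMin_le_sMax u).trans (hk u hu)))

theorem finite_setOf_isFBSeq (k : ℕ) : {a | IsFBSeq a ∧ ∀ u ∈ a, sMax u ≤ k}.Finite :=
  (List.finite_setOf_length_le_of_forall_mem (finite_setOf_sMax_le k) (k + 1)).subset
    fun _ ⟨ha, hk⟩ => ⟨ha.length_le hk, hk⟩

theorem IsInit.finLE {a : List FIN} {Y : ℕ → FIN} (ha : IsInit a Y) : finLE a Y := fun s hs => by
  obtain ⟨i, rfl⟩ := List.get_of_mem hs
  rw [ha i]
  exact self_mem_BU Y _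

theorem IsNashWilliams.eq_nil_of_append_mem {F : Set (List FIN)} (hF : IsNashWilliams F)
    {a x : List FIN} (ha : a ∈ F) (hax : a ++ x ∈ F) : x = [] := by
  simpa using hF a ha _ hax (List.prefix_append a x)

section Forcing

variable {U : Ultrafilter FIN} {F A : Set (List FIN)}

def Accepts (F A : Set (List FIN)) (S : Set FIN) (a : List FIN) : Prop :=
  ∀ x : List FIN, IsFBSeq x → listblt a x → (∀ u ∈ x, u ∈ S) → a ++ x ∈ F → a ++ x ∈ A

def UAccepts (U : Ultrafilter FIN) (F A : Set (List FIN)) (a : List FIN) : Prop :=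
  ∃ S ∈ U, Accepts F A S a

theorem IsNashWilliams.accepts_of_mem (hF : IsNashWilliams F) {a : List FIN} (haF : a ∈ F)
    (haA : a ∈ A) (S : Set FIN) : Accepts F A S a := fun _ _ _ _ hax => by
  rwa [hF.eq_nil_of_append_mem haF hax, List.append_nil]

theorem IsStableOrderedUnion.uAccepts_of_extensions (hU : IsStableOrderedUnion U) {a : List FIN}
    (ha : a ∉ F) (h : {s | UAccepts U F A (a ++ [s])} ∈ U) : UAccepts U F A a := by
  have : ∀ s, ∃ S ∈ U, UAccepts U F A (a ++ [s]) → Accepts F A S (a ++ [s]) := fun s => by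
    by_cases hs : UAccepts U F A (a ++ [s])
    · obtain ⟨S, hS, hacc⟩ := hs
      exact ⟨S, hS, fun _ => hacc⟩
    · exact ⟨Set.univ, univ_mem, fun h => absurd h hs⟩
  choose S hSU hS using this
  obtain ⟨T, hTU, hT₀, hT⟩ := hU.exists_diagonal
    (D := fun k => {s | UAccepts U F A (a ++ [s])} ∩ ⋂ s ∈ {s : FIN | sMax s ≤ k}, S s)
    fun k => inter_mem h ((biInter_mem (finite_setOf_sMax_le k)).2 fun s _ => hSU s)
  refine ⟨T, hTU, fun x hx hax hxT haxF => ?_⟩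
  cases x with
  | nil => exact absurd (by simpa using haxF) ha
  | cons s x =>
    have hsx := (List.pairwise_cons.1 hx.pairwise).1
    have hsT := hxT s List.mem_cons_self
    have hxS : ∀ t ∈ x, t ∈ S s := fun t ht => Set.mem_iInter₂.1
      (hT s hsT t (hxT t (List.mem_cons_of_mem s ht)) (hsx t ht)).2 s
      (show sMax s ≤ sMax s from le_rfl)
    have hasx : listblt (a ++ [s]) x := fun u hu t ht => by
      rcases List.mem_append.1 hu with hu | hu
      · exact hax u hu t (List.mem_cons_of_mem s ht)
      · exact List.mem_singleton.1 hu ▸ hsx t ht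
    simpa using hS s (hT₀ hsT).1 x (List.IsChain.tail hx) hasx hxS (by simpa using haxF)

theorem IsNashWilliams.not_uAccepts_append (hF : IsNashWilliams F) {S : Set FIN}
    {D : ℕ → Set FIN} (hD : ∀ k c t, IsFBSeq c → (∀ u ∈ c, sMax u ≤ k) → c ∉ F →
      ¬ UAccepts U F A c → t ∈ D k → ¬ UAccepts U F A (c ++ [t]))
    (hS : ∀ s ∈ S, ∀ t ∈ S, blt s t → t ∈ D (sMax s)) :
    ∀ d c k, IsFBSeq (c ++ d) → c ++ d ∈ F → (∀ u ∈ c, sMax u ≤ k) →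
      (∀ t ∈ d, t ∈ S ∧ t ∈ D k) → ¬ UAccepts U F A c → ¬ UAccepts U F A (c ++ d)
  | [], c, _, _, _, _, _, hc => by rwa [List.append_nil]
  | s :: d, c, k, hcd, hcdF, hck, hd, hc => by
    obtain ⟨-, hsd, hcsd⟩ := List.pairwise_append.1 hcd.pairwise
    have hcF : c ∉ F := fun h => List.cons_ne_nil s d (hF.eq_nil_of_append_mem h hcdF)
    have hcs := hD k c s (List.IsChain.left_of_append hcd) hck hcF hc (hd s List.mem_cons_self).2
    have hcsk : ∀ u ∈ c ++ [s], sMax u ≤ sMax s := fun u hu => by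
      rcases List.mem_append.1 hu with hu | hu
      · exact (hcsd u hu s List.mem_cons_self).le.trans (sMin_le_sMax s)
      · rw [List.mem_singleton.1 hu]
    have hdS : ∀ t ∈ d, t ∈ S ∧ t ∈ D (sMax s) := fun t ht =>
      ⟨(hd t (List.mem_cons_of_mem s ht)).1, hS s (hd s List.mem_cons_self).1 t
        (hd t (List.mem_cons_of_mem s ht)).1 ((List.pairwise_cons.1 hsd).1 t ht)⟩
    simpa using hF.not_uAccepts_append hD hS d (c ++ [s]) (sMax s) (by simpa using hcd)
      (by simpa using hcdF) hcsk hdS hcs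

theorem IsStableOrderedUnion.exists_forall_notMem_of_not_uAccepts (hU : IsStableOrderedUnion U)
    (hF : IsNashWilliams F) (h : ¬ UAccepts U F A []) :
    ∃ S ∈ U, ∀ b ∈ F, IsFBSeq b → (∀ u ∈ b, u ∈ S) → b ∉ A := by
  have hR : ∀ c, c ∉ F → ¬ UAccepts U F A c → {t | ¬ UAccepts U F A (c ++ [t])} ∈ U :=
    fun c hcF hc => Ultrafilter.compl_mem_iff_notMem.2 fun h' =>
      hc (hU.uAccepts_of_extensions hcF h')
  let D : ℕ → Set FIN := fun k =>
    ⋂ c ∈ {c | IsFBSeq c ∧ ∀ u ∈ c, sMax u ≤ k} ∩ {c | c ∉ F ∧ ¬ UAccepts U F A c},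
      {t | ¬ UAccepts U F A (c ++ [t])}
  obtain ⟨S, hSU, hS₀, hS⟩ := hU.exists_diagonal (D := D) fun k =>
    (biInter_mem ((finite_setOf_isFBSeq k).subset Set.inter_subset_left)).2
      fun c hc => hR c hc.2.1 hc.2.2
  refine ⟨S, hSU, fun b hbF hb hbS hbA => ?_⟩
  refine hF.not_uAccepts_append (D := D)
    (fun k c t hc hck hcF hcA ht => Set.mem_iInter₂.1 ht c ⟨⟨hc, hck⟩, hcF, hcA⟩) hS b [] 0 hb hbF
    (by simp) (fun t ht => ⟨hbS t ht, hS₀ (hbS t ht)⟩) h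
    ⟨Set.univ, univ_mem, hF.accepts_of_mem hbF hbA _⟩

end Forcing

theorem mem_UFront_of_forall {U : Ultrafilter FIN} (hU : IsOrderedUnion U) {F A : Set (List FIN)}
    {X : ℕ → FIN} (hXU : BU X ∈ U) (hAF : A ⊆ F) {S : Set FIN} (hS : S ∈ U)
    (h : ∀ b ∈ F, (∀ u ∈ b, u ∈ S) → b ∈ A) : A ∈ UFront U F X := by
  obtain ⟨Y, hY, hYU, hYS⟩ := hU _ (inter_mem hS hXU)
  exact ⟨hAF, Y, hY, seqLE_iff_BU_subset.2 (hYS.trans Set.inter_subset_right), hYU,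
    fun b ⟨hbF, hbY⟩ => h b hbF fun u hu => (hYS (hbY u hu)).1⟩

theorem stmt19_general (U : Ultrafilter FIN) (hU : IsStableOrderedUnion U)
    (F : Set (List FIN)) (X : ℕ → FIN) (hF : IsFront F X)
    (hXU : BU X ∈ U) :
    (∅ : Set (List FIN)) ∉ UFront U F X ∧
    F ∈ UFront U F X ∧
    (∀ A B : Set (List FIN), A ∈ UFront U F X → B ∈ UFront U F X →
      A ∩ B ∈ UFront U F X) ∧
    (∀ A B : Set (List FIN), A ∈ UFront U F X → A ⊆ B → B ⊆ F → B ∈ UFront U F X) ∧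
    (∀ A : Set (List FIN), A ⊆ F → A ∈ UFront U F X ∨ F \ A ∈ UFront U F X) := by
  obtain ⟨hNW, hFX, hfront⟩ := hF
  refine ⟨?_, mem_UFront_of_forall hU.1 hXU subset_rfl univ_mem fun b hb _ => hb, ?_, ?_,
    fun A hAF => ?_⟩
  · rintro ⟨-, Y, hY, hYX, -, hYF⟩
    obtain ⟨a, haF, ha⟩ := hfront Y hY hYX
    exact hYF ⟨haF, ha.finLE⟩
  · rintro A B ⟨hAF, _, _, _, hY₁U, hA⟩ ⟨_, _, _, _, hY₂U, hB⟩
    exact mem_UFront_of_forall hU.1 hXU (Set.inter_subset_left.trans hAF) (inter_mem hY₁U hY₂U)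
      fun b hb hbY => ⟨hA ⟨hb, fun u hu => (hbY u hu).1⟩, hB ⟨hb, fun u hu => (hbY u hu).2⟩⟩
  · rintro A B ⟨-, Y, hY, hYX, hYU, hYA⟩ hAB hBF
    exact ⟨hBF, Y, hY, hYX, hYU, hYA.trans hAB⟩
  · by_cases h : UAccepts U F A []
    · obtain ⟨S, hS, hacc⟩ := h
      exact .inl (mem_UFront_of_forall hU.1 hXU hAF hS fun b hb hbS =>
        hacc b (hFX b hb).1 (by simp [listblt]) hbS hb)
    · obtain ⟨S, hS, hrej⟩ := hU.exists_forall_notMem_of_not_uAccepts hNW h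
      exact .inr (mem_UFront_of_forall hU.1 hXU Set.sdiff_subset hS fun b hb hbS =>
        ⟨hb, hrej b hb (hFX b hb).1 hbS⟩)

/-- `U↾F` is an ultrafilter on the base set `F`. -/
theorem stmt19 (U : Ultrafilter FIN) (hU : IsStableOrderedUnion U)
    (F : Set (List FIN)) (X : ℕ → FIN) (hXB : IsBSeq X) (hF : IsFront F X)
    (hXU : BU X ∈ U) :
    (∅ : Set (List FIN)) ∉ UFront U F X ∧
    F ∈ UFront U F X ∧
    (∀ A B : Set (List FIN), A ∈ UFront U F X → B ∈ UFront U F X →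
      A ∩ B ∈ UFront U F X) ∧
    (∀ A B : Set (List FIN), A ∈ UFront U F X → A ⊆ B → B ⊆ F → B ∈ UFront U F X) ∧
    (∀ A : Set (List FIN), A ⊆ F → A ∈ UFront U F X ∨ F \ A ∈ UFront U F X) :=
  stmt19_general U hU F X hF hXU
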